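/- Let k ∈ ℕ with k ≥ 1, let z = (z₁,…,z_k) ∈ ℝ^k with z₁ < … < z_k, let α = (α₁,…,α_k) ∈ ℝ^k and let ν ∈ (0, ρ_{z,α}), and set z₀ = −∞, z_{k+1} = ∞. Then for every i ∈ {1,…,k+1}, the derivative G_{z,α,ν}' is differentiable on the open interval (z_{i−1}, z_i) with a derivative G_{z,α,ν}'' that is bounded and Lipschitz continuous on (z_{i−1}, z_i); moreover, for every i ∈ {1,…,k} the one-sided limits of G_{z,α,ν}'' at z_i exist and satisfy lim_{x↑z_i} G_{z,α,ν}''(x) = −2α_i and lim_{x↓z_i} G_{z,α,ν}''(x) = 2α_i. -/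

import Mathlib

/-- The bump function `φ(x) = (1 - x²)⁴ · 1_{[-1,1]}(x)`. -/
noncomputable def phi (x : ℝ) : ℝ := if x ∈ Set.Icc (-1 : ℝ) 1 then (1 - x ^ 2) ^ 4 else 0

/-- The transformation `G_{z,α,ν}(x) = x + Σ_{i=1}^k α_i (x - z_i)|x - z_i| φ((x - z_i)/ν)`. -/
noncomputable def Gfun (k : ℕ) (z α : Fin k → ℝ) (ν : ℝ) (x : ℝ) : ℝ :=
  x + ∑ i : Fin k, α i * (x - z i) * |x - z i| * phi ((x - z i) / ν)

/-- For `z₁ < … < z_k` and `i ∈ {0,…,k}`, `piece k z i` is the open interval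
`(z_i, z_{i+1})` of the partition of `ℝ`, with the conventions `z₀ = -∞`, `z_{k+1} = ∞`. -/
def piece (k : ℕ) (z : Fin k → ℝ) (i : Fin (k + 1)) : Set ℝ :=
  {x : ℝ | (∀ j : Fin k, (j : ℕ) < (i : ℕ) → z j < x) ∧
    ∀ j : Fin k, (i : ℕ) ≤ (j : ℕ) → x < z j}

/-!
Off the points `z_j` we have `(x - z_j)|x - z_j| = ±(x - z_j)²`, with a sign pattern that is
constant on each piece, so there `G = id + T` where `T` is a finite sum of translates of
`±u²φ(u/ν)`. Since `φ(x) = max(1 - x², 0)⁴` is `C³`, `T` is `C³` with compact support, which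
makes `T''` bounded and Lipschitz. Near `z_i` the other bumps vanish (their supports are
`ν`-balls around points more than `2ν` away), so the one-sided limits of `G''` at `z_i` are
`∓α_i (u²φ(u/ν))''(0) = ∓2α_i`.
-/

open Set Filter Topology

lemma hasDerivAt_max_zero_pow (n : ℕ) (t : ℝ) :
    HasDerivAt (fun s : ℝ => max s 0 ^ (n + 2)) ((n + 2) * max t 0 ^ (n + 1)) t := by
  rcases lt_trichotomy t 0 with ht | rfl | ht
  · have hzero : (fun s : ℝ => max s 0 ^ (n + 2)) =ᶠ[𝓝 t] fun _ => 0 := by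
      filter_upwards [eventually_lt_nhds ht] with s hs
      simp [max_eq_right hs.le]
    simpa [max_eq_right ht.le] using (hasDerivAt_const t (0 : ℝ)).congr_of_eventuallyEq hzero
  · have hO : (fun s : ℝ => max s 0 ^ (n + 2)) =O[𝓝 0] fun s => ‖s - 0‖ ^ (n + 2) := by
      refine Asymptotics.IsBigO.of_bound 1 (Eventually.of_forall fun s => ?_)
      simp only [norm_pow, Real.norm_eq_abs, sub_zero, abs_abs, one_mul]
      exact pow_le_pow_left₀ (abs_nonneg _) (by cases le_total s 0 <;> simp [*, abs_of_nonneg]) _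
    simpa using (hO.hasFDerivAt (by omega)).hasDerivAt
  · have hpow : (fun s : ℝ => max s 0 ^ (n + 2)) =ᶠ[𝓝 t] fun s => s ^ (n + 2) := by
      filter_upwards [eventually_gt_nhds ht] with s hs
      rw [max_eq_left hs.le]
    simpa [max_eq_left ht.le] using (hasDerivAt_pow (n + 2) t).congr_of_eventuallyEq hpow

lemma contDiff_max_zero_pow (n : ℕ) : ContDiff ℝ n fun t : ℝ => max t 0 ^ (n + 1) := by
  induction n with
  | zero => exact contDiff_zero.2 (by fun_prop)
  | succ n ih =>
    rw [Nat.cast_succ, contDiff_succ_iff_deriv]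
    refine ⟨fun t => (hasDerivAt_max_zero_pow n t).differentiableAt, by simp, ?_⟩
    rw [funext fun t => (hasDerivAt_max_zero_pow n t).deriv]
    exact contDiff_const.mul ih

lemma phi_eq_max_zero_pow : phi = fun x => max (1 - x ^ 2) 0 ^ 4 := by
  funext x
  by_cases hx : x ∈ Icc (-1 : ℝ) 1
  · have : 0 ≤ 1 - x ^ 2 := by nlinarith [hx.1, hx.2]
    simp [phi, hx, max_eq_left this]
  · have : 1 - x ^ 2 < 0 := by
      simp only [mem_Icc, not_and_or, not_le] at hx
      rcases hx with hx | hx <;> nlinarith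
    simp [phi, hx, max_eq_right this.le]

lemma contDiff_phi : ContDiff ℝ 3 phi := by
  rw [phi_eq_max_zero_pow]
  exact (contDiff_max_zero_pow 3).comp (by fun_prop)

noncomputable def sqBump (ν u : ℝ) : ℝ := u ^ 2 * phi (u / ν)

lemma contDiff_sqBump (ν : ℝ) : ContDiff ℝ 3 (sqBump ν) :=
  (contDiff_id.pow 2).mul (contDiff_phi.comp (contDiff_id.div_const ν))

lemma sqBump_eq_zero {ν u : ℝ} (hν : 0 < ν) (hu : ν < |u|) : sqBump ν u = 0 := by
  have : u / ν ∉ Icc (-1 : ℝ) 1 := by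
    rw [mem_Icc, ← abs_le, abs_div, abs_of_pos hν, div_le_one hν, not_le]
    exact hu
  simp [sqBump, phi, this]

lemma deriv_deriv_sq_mul_zero {f : ℝ → ℝ} (hf : ContDiff ℝ 2 f) :
    deriv (deriv fun u => u ^ 2 * f u) 0 = 2 * f 0 := by
  have hf' : Differentiable ℝ f := hf.differentiable (by norm_num)
  have hf'' : Differentiable ℝ (deriv f) :=
    (hf.iterate_deriv' 1 1).differentiable one_ne_zero
  have hd : deriv (fun u => u ^ 2 * f u) = fun u => 2 * u * f u + u ^ 2 * deriv f u := by
    funext u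
    convert ((hasDerivAt_pow 2 u).fun_mul (hf' u).hasDerivAt).deriv using 1
    norm_num
  rw [hd]
  convert ((((hasDerivAt_id (0 : ℝ)).const_mul 2).fun_mul (hf' 0).hasDerivAt).fun_add
    ((hasDerivAt_pow 2 (0 : ℝ)).fun_mul (hf'' 0).hasDerivAt)).deriv using 1
  all_goals norm_num

lemma deriv_deriv_sqBump_zero (ν : ℝ) : deriv (deriv (sqBump ν)) 0 = 2 := by
  have hφ : ContDiff ℝ 2 fun u => phi (u / ν) :=
    (contDiff_phi.comp (contDiff_id.div_const ν)).of_le (by norm_num)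
  rw [show sqBump ν = fun u => u ^ 2 * phi (u / ν) from rfl, deriv_deriv_sq_mul_zero hφ]
  norm_num [phi]

section IdAdd

variable {G T : ℝ → ℝ} {U : Set ℝ}

lemma eqOn_deriv_of_eqOn_id_add (hU : IsOpen U) (hT : Differentiable ℝ T)
    (hGT : EqOn G (fun x => x + T x) U) : EqOn (deriv G) (fun x => 1 + deriv T x) U := by
  intro x hx
  rw [hGT.deriv hU hx]
  exact ((hasDerivAt_id x).add (hT x).hasDerivAt).deriv

lemma eqOn_deriv_deriv_of_eqOn_id_add (hU : IsOpen U) (hT : Differentiable ℝ T)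
    (hGT : EqOn G (fun x => x + T x) U) : EqOn (deriv (deriv G)) (deriv (deriv T)) U := by
  intro x hx
  rw [(eqOn_deriv_of_eqOn_id_add hU hT hGT).deriv hU hx]
  exact deriv_const_add 1

lemma differentiableAt_deriv_of_eqOn_id_add (hU : IsOpen U) (hT : ContDiff ℝ 3 T)
    (hGT : EqOn G (fun x => x + T x) U) {x : ℝ} (hx : x ∈ U) :
    DifferentiableAt ℝ (deriv G) x := by
  have hT' : Differentiable ℝ (deriv T) := (hT.iterate_deriv' 2 1).differentiable (by norm_num)
  exact ((hT' x).const_add 1).congr_of_eventuallyEq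
    ((eqOn_deriv_of_eqOn_id_add hU (hT.differentiable (by norm_num)) hGT).eventuallyEq_of_mem
      (hU.mem_nhds hx))

lemma tendsto_deriv_deriv_of_eqOn_id_add (hU : IsOpen U) (hT : ContDiff ℝ 3 T)
    (hGT : EqOn G (fun x => x + T x) U) {l : Filter ℝ} {a : ℝ} (hUl : U ∈ l)
    (hl : l ≤ 𝓝 a) : Tendsto (deriv (deriv G)) l (𝓝 (deriv (deriv T) a)) := by
  have h := eqOn_deriv_deriv_of_eqOn_id_add hU (hT.differentiable (by norm_num)) hGT
  exact (((hT.iterate_deriv' 1 2).continuous.tendsto a).mono_left hl).congr'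
    (h.eventuallyEq_of_mem hUl).symm

lemma exists_bound_deriv_deriv_of_eqOn_id_add (hU : IsOpen U) (hT : ContDiff ℝ 3 T)
    (hGT : EqOn G (fun x => x + T x) U) (hTc : HasCompactSupport T) :
    ∃ C, ∀ x ∈ U, |deriv (deriv G) x| ≤ C := by
  obtain ⟨C, hC⟩ := (hT.iterate_deriv' 1 2).continuous.bounded_above_of_compact_support
    hTc.deriv.deriv
  refine ⟨C, fun x hx => ?_⟩
  rw [eqOn_deriv_deriv_of_eqOn_id_add hU (hT.differentiable (by norm_num)) hGT hx]
  exact hC x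

lemma exists_lipschitzOnWith_deriv_deriv_of_eqOn_id_add (hU : IsOpen U) (hT : ContDiff ℝ 3 T)
    (hGT : EqOn G (fun x => x + T x) U) (hTc : HasCompactSupport T) :
    ∃ K, LipschitzOnWith K (deriv (deriv G)) U := by
  obtain ⟨K, hK⟩ := ContDiff.lipschitzWith_of_hasCompactSupport hTc.deriv.deriv
    (hT.iterate_deriv' 1 2) one_ne_zero
  refine ⟨K, fun x hx y hy => ?_⟩
  have h := eqOn_deriv_deriv_of_eqOn_id_add hU (hT.differentiable (by norm_num)) hGT
  rw [h hx, h hy]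
  exact hK x y

end IdAdd

noncomputable def branch (k : ℕ) (z α σ : Fin k → ℝ) (ν x : ℝ) : ℝ :=
  ∑ j, α j * σ j * sqBump ν (x - z j)

section Branch

variable {k : ℕ} {z α σ : Fin k → ℝ} {ν : ℝ}

lemma contDiff_branch : ContDiff ℝ 3 (branch k z α σ ν) :=
  ContDiff.sum fun _ _ =>
    contDiff_const.mul ((contDiff_sqBump ν).comp (contDiff_id.sub contDiff_const))

lemma hasCompactSupport_branch (hν : 0 < ν) : HasCompactSupport (branch k z α σ ν) := by
  refine HasCompactSupport.intro
    (isCompact_iUnion fun j => isCompact_Icc (a := z j - ν) (b := z j + ν))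
    fun x hx => Finset.sum_eq_zero fun j _ => ?_
  have hj : x ∉ Icc (z j - ν) (z j + ν) := fun h => hx (mem_iUnion.2 ⟨j, h⟩)
  rw [sqBump_eq_zero hν, mul_zero]
  rwa [mem_Icc, ← sub_le_iff_le_add', sub_le_comm, ← abs_sub_le_iff, not_le, abs_sub_comm] at hj

lemma Gfun_eqOn_add_branch {U : Set ℝ} (hU : ∀ x ∈ U, ∀ j, |x - z j| = σ j * (x - z j)) :
    EqOn (Gfun k z α ν) (fun x => x + branch k z α σ ν x) U := by
  intro x hx
  simp only [Gfun, branch, sqBump]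
  congr 1
  refine Finset.sum_congr rfl fun j _ => ?_
  rw [hU x hx j]
  ring

lemma deriv_deriv_branch_of_lt_abs_sub (hν : 0 < ν) {i : Fin k}
    (hsep : ∀ j ≠ i, ν < |z i - z j|) :
    deriv (deriv (branch k z α σ ν)) (z i) = 2 * (α i * σ i) := by
  have hfar : ∀ᶠ x in 𝓝 (z i), ∀ j, j ≠ i → ν < |x - z j| :=
    eventually_all.2 fun j => eventually_imp_distrib_left.2 fun hj =>
      ((continuous_id.sub continuous_const).abs.tendsto (z i)).eventually (lt_mem_nhds (hsep j hj))
  have hloc : branch k z α σ ν =ᶠ[𝓝 (z i)] fun x => α i * σ i * sqBump ν (x - z i) := by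
    filter_upwards [hfar] with x hx
    exact Finset.sum_eq_single i (fun j _ hj => by rw [sqBump_eq_zero hν (hx j hj), mul_zero])
      (by simp)
  rw [hloc.deriv.deriv_eq]
  simp only [deriv_const_mul_field', deriv_comp_sub_const, sub_self, deriv_deriv_sqBump_zero]
  ring

end Branch

def pieceSign (k : ℕ) (i : Fin (k + 1)) (j : Fin k) : ℝ := if (j : ℕ) < i then 1 else -1

section Piece

variable {k : ℕ} {z : Fin k → ℝ}

lemma abs_sub_eq_pieceSign_mul {i : Fin (k + 1)} {x : ℝ} (hx : x ∈ piece k z i) (j : Fin k) :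
    |x - z j| = pieceSign k i j * (x - z j) := by
  unfold pieceSign
  split_ifs with h
  · rw [abs_of_pos (sub_pos.2 (hx.1 j h)), one_mul]
  · rw [abs_of_neg (sub_neg.2 (hx.2 j (not_lt.1 h))), neg_one_mul]

lemma isOpen_piece (i : Fin (k + 1)) : IsOpen (piece k z i) :=
  isOpen_iff_mem_nhds.2 fun _ hx =>
    (eventually_all.2 fun j => eventually_imp_distrib_left.2 fun hj =>
      eventually_gt_nhds (hx.1 j hj)).and
    (eventually_all.2 fun j => eventually_imp_distrib_left.2 fun hj =>
      eventually_lt_nhds (hx.2 j hj))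

lemma piece_castSucc_mem_nhdsLT (hz : StrictMono z) (i : Fin k) :
    piece k z i.castSucc ∈ 𝓝[<] z i := by
  have hlow : ∀ᶠ x in 𝓝 (z i), ∀ j : Fin k, (j : ℕ) < i → z j < x :=
    eventually_all.2 fun j => eventually_imp_distrib_left.2 fun hj => eventually_gt_nhds (hz hj)
  filter_upwards [nhdsWithin_le_nhds hlow, self_mem_nhdsWithin] with x hlow hx
  exact ⟨hlow, fun j hj => hx.trans_le (hz.monotone hj)⟩

lemma piece_succ_mem_nhdsGT (hz : StrictMono z) (i : Fin k) :
    piece k z i.succ ∈ 𝓝[>] z i := by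
  have hup : ∀ᶠ x in 𝓝 (z i), ∀ j : Fin k, (i : ℕ) + 1 ≤ j → x < z j :=
    eventually_all.2 fun j => eventually_imp_distrib_left.2 fun hj => eventually_lt_nhds (hz hj)
  filter_upwards [nhdsWithin_le_nhds hup, self_mem_nhdsWithin] with x hup hx
  exact ⟨fun j hj => (hz.monotone (Nat.lt_succ_iff.1 hj)).trans_lt hx, hup⟩

end Piece

lemma lt_abs_sub_of_lt_half_sub_succ {k : ℕ} {z : Fin k → ℝ} {ν : ℝ} (hz : StrictMono z)
    (hν : 0 < ν) (hgap : ∀ i j : Fin k, (i : ℕ) + 1 = (j : ℕ) → ν < (z j - z i) / 2)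
    {i j : Fin k} (hji : j ≠ i) : ν < |z i - z j| := by
  wlog hlt : j < i generalizing i j
  · rw [abs_sub_comm]
    exact this hji.symm (lt_of_le_of_ne (not_lt.1 hlt) hji.symm)
  have hnext : (j : ℕ) + 1 < k := by omega
  have hstep := hgap j ⟨j + 1, hnext⟩ rfl
  have hle : z ⟨j + 1, hnext⟩ ≤ z i := hz.monotone (Fin.le_def.2 hlt)
  rw [abs_of_pos (by linarith)]
  linarith

theorem stmt_5_general (k : ℕ) (z α : Fin k → ℝ) (hz : StrictMono z)
    (ν : ℝ) (hν0 : 0 < ν)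
    (hν2 : ∀ i j : Fin k, (i : ℕ) + 1 = (j : ℕ) → ν < (z j - z i) / 2) :
    (∀ i : Fin (k + 1),
      (∀ x ∈ piece k z i, DifferentiableAt ℝ (deriv (Gfun k z α ν)) x) ∧
      (∃ C : ℝ, ∀ x ∈ piece k z i, |deriv (deriv (Gfun k z α ν)) x| ≤ C) ∧
      (∃ K : NNReal, LipschitzOnWith K (deriv (deriv (Gfun k z α ν))) (piece k z i))) ∧
    (∀ i : Fin k,
      Filter.Tendsto (deriv (deriv (Gfun k z α ν)))
        (nhdsWithin (z i) (Set.Iio (z i))) (nhds (-2 * α i)) ∧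
      Filter.Tendsto (deriv (deriv (Gfun k z α ν)))
        (nhdsWithin (z i) (Set.Ioi (z i))) (nhds (2 * α i))) := by
  have hGT (i : Fin (k + 1)) := Gfun_eqOn_add_branch (α := α) (ν := ν)
    fun x hx => abs_sub_eq_pieceSign_mul (z := z) (i := i) hx
  have hlim (i : Fin k) (p : Fin (k + 1)) {l : Filter ℝ} (hp : piece k z p ∈ l)
      (hl : l ≤ 𝓝 (z i)) :
      Tendsto (deriv (deriv (Gfun k z α ν))) l (𝓝 (2 * (α i * pieceSign k p i))) := by
    rw [← deriv_deriv_branch_of_lt_abs_sub hν0 fun _ =>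
      lt_abs_sub_of_lt_half_sub_succ hz hν0 hν2]
    exact tendsto_deriv_deriv_of_eqOn_id_add (isOpen_piece p) contDiff_branch (hGT p) hp hl
  refine ⟨fun i => ⟨fun x hx => ?_, ?_, ?_⟩, fun i => ⟨?_, ?_⟩⟩
  · exact differentiableAt_deriv_of_eqOn_id_add (isOpen_piece i) contDiff_branch (hGT i) hx
  · exact exists_bound_deriv_deriv_of_eqOn_id_add (isOpen_piece i) contDiff_branch (hGT i)
      (hasCompactSupport_branch hν0)
  · exact exists_lipschitzOnWith_deriv_deriv_of_eqOn_id_add (isOpen_piece i) contDiff_branch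
      (hGT i) (hasCompactSupport_branch hν0)
  · convert hlim i i.castSucc (piece_castSucc_mem_nhdsLT hz i) nhdsWithin_le_nhds using 2
    simp [pieceSign]
  · convert hlim i i.succ (piece_succ_mem_nhdsGT hz i) nhdsWithin_le_nhds using 2
    simp [pieceSign]

/-- For `k ≥ 1`, `z₁ < … < z_k`, `α ∈ ℝ^k` and `ν ∈ (0, ρ_{z,α})`:
on each open interval `(z_{i-1}, z_i)` of the partition, `G_{z,α,ν}'` is differentiable
with derivative `G_{z,α,ν}''` bounded and Lipschitz continuous there; moreover the
one-sided limits of `G_{z,α,ν}''` at every `z_i` exist and equal `-2α_i` (from the left)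
and `2α_i` (from the right). -/
theorem stmt_5 (k : ℕ) (hk : 1 ≤ k) (z α : Fin k → ℝ) (hz : StrictMono z)
    (ν : ℝ) (hν0 : 0 < ν)
    (hν1 : ∀ i : Fin k, ν * (8 * |α i|) < 1)
    (hν2 : ∀ i j : Fin k, (i : ℕ) + 1 = (j : ℕ) → ν < (z j - z i) / 2) :
    (∀ i : Fin (k + 1),
      (∀ x ∈ piece k z i, DifferentiableAt ℝ (deriv (Gfun k z α ν)) x) ∧
      (∃ C : ℝ, ∀ x ∈ piece k z i, |deriv (deriv (Gfun k z α ν)) x| ≤ C) ∧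
      (∃ K : NNReal, LipschitzOnWith K (deriv (deriv (Gfun k z α ν))) (piece k z i))) ∧
    (∀ i : Fin k,
      Filter.Tendsto (deriv (deriv (Gfun k z α ν)))
        (nhdsWithin (z i) (Set.Iio (z i))) (nhds (-2 * α i)) ∧
      Filter.Tendsto (deriv (deriv (Gfun k z α ν)))
        (nhdsWithin (z i) (Set.Ioi (z i))) (nhds (2 * α i))) :=
  stmt_5_general k z α hz ν hν0 hν2
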